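/- Let v : S¹ → ℂ be continuous with |v(z)| = 1 for all z ∈ S¹, and let t ≥ 1 be such that 1/2 is not in the spectrum of the self-adjoint operator e(u_t, M_v). Let χ be the characteristic function of [1/2, ∞), so that χ(e(u_t, M_v)) is a well-defined projection given by continuous functional calculus. Then the difference χ(e(u_t, M_v)) − [[1, 0], [0, 0]] is a compact operator on L²(S¹) ⊕ L²(S¹). -/

import Mathlib

open Complex Real Filter MeasureTheory AddCircle ContinuousLinearMap

instance : Fact ((0 : ℝ) < 1) := ⟨one_pos⟩

/-- `L²(S¹)`, realized as the `L²` space of the circle `ℝ/ℤ` with its normalized Haar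
measure; the Fourier orthonormal basis is `(fourierLp 2 n)_{n ∈ ℤ}`. -/
noncomputable abbrev L2Circle : Type := Lp ℂ 2 (@haarAddCircle 1 _)

/-- The block operator `[[A, B], [C, D]]` on `L²(S¹) ⊕ L²(S¹)`. -/
noncomputable def blockOp (A B C D : L2Circle →L[ℂ] L2Circle) :
    WithLp 2 (L2Circle × L2Circle) →L[ℂ] WithLp 2 (L2Circle × L2Circle) :=
  (WithLp.prodContinuousLinearEquiv 2 ℂ L2Circle L2Circle).symm.toContinuousLinearMap ∘L
    (((A ∘L fst ℂ L2Circle L2Circle) + (B ∘L snd ℂ L2Circle L2Circle)).prod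
      ((C ∘L fst ℂ L2Circle L2Circle) + (D ∘L snd ℂ L2Circle L2Circle))) ∘L
    (WithLp.prodContinuousLinearEquiv 2 ℂ L2Circle L2Circle).toContinuousLinearMap

/-- The Loring element `e(u_t, M_v)` of the pair of unitaries `(u_t, M_v)`. -/
noncomputable def loringOp (f g h : ℂ → ℝ) (Ut M : L2Circle →L[ℂ] L2Circle) :
    WithLp 2 (L2Circle × L2Circle) →L[ℂ] WithLp 2 (L2Circle × L2Circle) :=
  blockOp (cfc (fun z : ℂ => (f z : ℂ)) Ut)
    (cfc (fun z : ℂ => (g z : ℂ)) Ut + cfc (fun z : ℂ => (h z : ℂ)) Ut * M)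
    (star M * cfc (fun z : ℂ => (h z : ℂ)) Ut + cfc (fun z : ℂ => (g z : ℂ)) Ut)
    (1 - cfc (fun z : ℂ => (f z : ℂ)) Ut)

noncomputable instance : ContinuousFunctionalCalculus ℝ
    (WithLp 2 (L2Circle × L2Circle) →L[ℂ] WithLp 2 (L2Circle × L2Circle)) IsSelfAdjoint :=
  @IsSelfAdjoint.instContinuousFunctionalCalculus
    (WithLp 2 (L2Circle × L2Circle) →L[ℂ] WithLp 2 (L2Circle × L2Circle)) _ _ _ _ _

/-!
Compact operators form a closed two-sided ideal `K`, and continuous functional calculus respects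
congruence modulo a closed ideal: by Stone–Weierstrass it suffices to check this on the coordinate
function and its conjugate. The operator `u_t` is diagonal in the Fourier basis and moves only the
finitely many modes `0 ≤ n ≤ t`, so `u_t ≡ 1 (mod K)` and hence `φ(u_t) ≡ φ(1)`. With `f(1) = 1`
and `g(1) = h(1) = 0` this gives `e(u_t, M_v) ≡ P := [[1, 0], [0, 0]]`. Finally `χ` is continuous
away from `1/2`, hence on the spectra of `e(u_t, M_v)` and of `P ⊆ {0, 1}`, so
`χ(e(u_t, M_v)) ≡ χ(P) = P`.
-/

open scoped ComplexConjugate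

section CompactOperatorIdeal

variable (𝕜 E : Type*) [NontriviallyNormedField 𝕜] [NormedAddCommGroup E] [NormedSpace 𝕜 E]

noncomputable def compactOperatorIdeal : TwoSidedIdeal (E →L[𝕜] E) :=
  .mk' {T | IsCompactOperator T} isCompactOperator_zero (fun hS hT => hS.add hT)
    (fun hT => hT.neg) (fun hT => hT.clm_comp _) (fun hT => hT.comp_clm _)

variable {𝕜 E}

theorem mem_compactOperatorIdeal {T : E →L[𝕜] E} :
    T ∈ compactOperatorIdeal 𝕜 E ↔ IsCompactOperator T :=
  TwoSidedIdeal.mem_mk' ..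

theorem isClosed_compactOperatorIdeal [CompleteSpace E] :
    IsClosed (compactOperatorIdeal 𝕜 E : Set (E →L[𝕜] E)) := by
  have : (compactOperatorIdeal 𝕜 E : Set (E →L[𝕜] E)) = {T : E →L[𝕜] E | IsCompactOperator T} :=
    Set.ext fun _ => mem_compactOperatorIdeal
  exact this ▸ isClosed_setOfPred_isCompactOperator

end CompactOperatorIdeal

theorem IsCompactOperator.prodMk {E F G : Type*} [TopologicalSpace E] [Zero E]
    [TopologicalSpace F] [TopologicalSpace G] {S : E → F} {T : E → G}
    (hS : IsCompactOperator S) (hT : IsCompactOperator T) :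
    IsCompactOperator fun x => (S x, T x) := by
  obtain ⟨K, hK, hSK⟩ := hS
  obtain ⟨L, hL, hTL⟩ := hT
  exact ⟨K ×ˢ L, hK.prod hL, inter_mem hSK hTL⟩

theorem InnerProductSpace.isCompactOperator_rankOne {𝕜 E F : Type*} [RCLike 𝕜]
    [SeminormedAddCommGroup E] [NormedSpace 𝕜 E]
    [SeminormedAddCommGroup F] [InnerProductSpace 𝕜 F] (x : E) (y : F) :
    IsCompactOperator (rankOne 𝕜 x y) :=
  (isCompactOperator_of_locallyCompactSpace_dom (innerSL 𝕜 y)).clm_comp (toSpanSingleton 𝕜 x)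

section TwoSidedIdeal

variable {𝕜 A : Type*} [RCLike 𝕜] [Ring A] [StarRing A] [Algebra 𝕜 A] [TopologicalSpace A]
  [ContinuousSub A] (I : TwoSidedIdeal A)

open ContinuousMap in
theorem ContinuousMap.starAlgHom_sub_mem_of_map_id (hI : IsClosed (I : Set A)) {s : Set 𝕜}
    [CompactSpace s] {Φ Ψ : C(s, 𝕜) →⋆ₐ[𝕜] A} (hΦ : Continuous Φ) (hΨ : Continuous Ψ)
    (hid : Φ (restrict s (.id 𝕜)) - Ψ (restrict s (.id 𝕜)) ∈ I)
    (hstar : star (Φ (restrict s (.id 𝕜))) - star (Ψ (restrict s (.id 𝕜))) ∈ I)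
    (f : C(s, 𝕜)) : Φ f - Ψ f ∈ I := by
  induction f using ContinuousMap.induction_on_of_compact with
  | const r =>
    rw [show const s r = algebraMap 𝕜 C(s, 𝕜) r from rfl, AlgHomClass.commutes,
      AlgHomClass.commutes, sub_self]
    exact I.zero_mem
  | id => exact hid
  | star_id => rwa [map_star, map_star]
  | add f g hf hg =>
    rw [map_add, map_add, add_sub_add_comm]
    exact I.add_mem hf hg
  | mul f g hf hg =>
    rw [map_mul, map_mul, show Φ f * Φ g - Ψ f * Ψ g = Φ f * (Φ g - Ψ g) + (Φ f - Ψ f) * Ψ g by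
      noncomm_ring]
    exact I.add_mem (I.mul_mem_left _ _ hg) (I.mul_mem_right _ _ hf)
  | frequently f hf =>
    exact (hI.preimage (hΦ.sub hΨ)).mem_of_frequently_of_tendsto hf tendsto_id

-- `I` is not assumed to be closed under `star`, hence the hypothesis `hab_star`.
theorem cfc_sub_cfc_mem_of_sub_mem {p : A → Prop} [ContinuousFunctionalCalculus 𝕜 A p]
    (hI : IsClosed (I : Set A)) {a b : A} (ha : p a) (hb : p b) (hab : a - b ∈ I)
    (hab_star : star a - star b ∈ I) {φ : 𝕜 → 𝕜}
    (hφ : ContinuousOn φ (spectrum 𝕜 a ∪ spectrum 𝕜 b)) : cfc φ a - cfc φ b ∈ I := by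
  set s := spectrum 𝕜 a ∪ spectrum 𝕜 b
  have : CompactSpace s := isCompact_iff_compactSpace.mp
    ((ContinuousFunctionalCalculus.isCompact_spectrum a).union
      (ContinuousFunctionalCalculus.isCompact_spectrum b))
  let incl {t : Set 𝕜} (ht : t ⊆ s) : C(t, s) := ⟨Set.inclusion ht, continuous_inclusion ht⟩
  let Φ := (cfcHom ha).comp (ContinuousMap.compStarAlgHom' 𝕜 𝕜 (incl Set.subset_union_left))
  let Ψ := (cfcHom hb).comp (ContinuousMap.compStarAlgHom' 𝕜 𝕜 (incl Set.subset_union_right))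
  have hΦ : Continuous Φ := (cfcHom_continuous ha).comp (ContinuousMap.continuous_precomp _)
  have hΨ : Continuous Ψ := (cfcHom_continuous hb).comp (ContinuousMap.continuous_precomp _)
  have hΦid : Φ (.restrict s (.id 𝕜)) = a := cfcHom_id ha
  have hΨid : Ψ (.restrict s (.id 𝕜)) = b := cfcHom_id hb
  have key := ContinuousMap.starAlgHom_sub_mem_of_map_id I hI hΦ hΨ
    (hΦid ▸ hΨid ▸ hab) (hΦid ▸ hΨid ▸ hab_star) ⟨s.domRestrict φ, hφ.domRestrict⟩
  rwa [cfc_apply φ a ha (hφ.mono Set.subset_union_left),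
    cfc_apply φ b hb (hφ.mono Set.subset_union_right)]

end TwoSidedIdeal

theorem cfc_sub_algebraMap_mem_of_unitary {E : Type*} [NormedAddCommGroup E]
    [InnerProductSpace ℂ E] [CompleteSpace E] (I : TwoSidedIdeal (E →L[ℂ] E))
    (hI : IsClosed (I : Set (E →L[ℂ] E))) {u : E →L[ℂ] E} (hu : u ∈ unitary (E →L[ℂ] E))
    (hu1 : u - 1 ∈ I) {φ : ℂ → ℂ} (hφ : ContinuousOn φ (Metric.sphere 0 1)) :
    cfc φ u - algebraMap ℂ (E →L[ℂ] E) (φ 1) ∈ I := by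
  have hstar : star u - star 1 ∈ I := by
    rw [star_one, ← Unitary.star_mul_self_of_mem hu, ← mul_one (star u), mul_assoc, ← mul_sub,
      one_mul, ← neg_sub]
    exact I.mul_mem_left _ _ (I.neg_mem hu1)
  have hspec : spectrum ℂ u ∪ spectrum ℂ (1 : E →L[ℂ] E) ⊆ Metric.sphere 0 1 :=
    Set.union_subset (spectrum.subset_circle_of_unitary hu)
      (spectrum.subset_circle_of_unitary (one_mem _))
  have := cfc_sub_cfc_mem_of_sub_mem I hI (isStarNormal_of_mem_unitary hu) IsStarNormal.one
    hu1 hstar (hφ.mono hspec)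
  rwa [← map_one (algebraMap ℂ (E →L[ℂ] E)), cfc_algebraMap] at this

theorem continuousOn_ite_le_of_notMem {c : ℝ} {s : Set ℝ} (hc : c ∉ s) :
    ContinuousOn (fun x : ℝ => if c ≤ x then (1 : ℝ) else 0) s := by
  intro x hx
  refine ContinuousAt.continuousWithinAt ?_
  rcases lt_or_gt_of_ne (ne_of_mem_of_not_mem hx hc) with hxc | hcx
  · exact (continuousAt_const : ContinuousAt (fun _ => (0 : ℝ)) x).congr
      ((eventually_lt_nhds hxc).mono fun y hy => by simp [hy.not_ge])
  · exact (continuousAt_const : ContinuousAt (fun _ => (1 : ℝ)) x).congr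
      ((eventually_gt_nhds hcx).mono fun y hy => by simp [hy.le])

theorem cfc_ite_le_sub_mem {A : Type*} [Ring A] [StarRing A] [Algebra ℝ A] [TopologicalSpace A]
    [ContinuousSub A] [ContinuousFunctionalCalculus ℝ A IsSelfAdjoint] (I : TwoSidedIdeal A)
    (hI : IsClosed (I : Set A)) {a q : A} (ha : IsSelfAdjoint a) (hq : IsStarProjection q)
    (haq : a - q ∈ I) {c : ℝ} (hc0 : 0 < c) (hc1 : c < 1) (hc : c ∉ spectrum ℝ a) :
    cfc (fun x : ℝ => if c ≤ x then (1 : ℝ) else 0) a - q ∈ I := by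
  have hspec_q : spectrum ℝ q ⊆ {0, 1} := hq.isIdempotentElem.spectrum_subset ℝ
  have hcfc_q : cfc (fun x : ℝ => if c ≤ x then (1 : ℝ) else 0) q = q := by
    conv_rhs => rw [← cfc_id' ℝ q]
    refine cfc_congr fun x hx => ?_
    rcases hspec_q hx with rfl | rfl <;> simp [hc0.not_ge, hc1.le]
  have hc' : c ∉ spectrum ℝ a ∪ spectrum ℝ q := fun h =>
    h.elim hc fun hq' => by rcases hspec_q hq' with h | h <;> simp_all
  have := cfc_sub_cfc_mem_of_sub_mem I hI ha hq.isSelfAdjoint haq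
    (by rwa [ha.star_eq, hq.isSelfAdjoint.star_eq]) (continuousOn_ite_le_of_notMem hc')
  rwa [hcfc_q] at this

namespace HilbertBasis

variable {ι 𝕜 E : Type*} [RCLike 𝕜] [NormedAddCommGroup E] [InnerProductSpace 𝕜 E]
  (b : HilbertBasis ι 𝕜 E)

theorem clm_ext {F : Type*} [NormedAddCommGroup F] [NormedSpace 𝕜 F] {S T : E →L[𝕜] F}
    (h : ∀ i, S (b i) = T (b i)) : S = T :=
  ContinuousLinearMap.ext_on (Submodule.dense_iff_topologicalClosure_eq_top.mpr b.dense_span)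
    (by rintro _ ⟨i, rfl⟩; exact h i)

theorem isCompactOperator_of_apply_eq_zero {T : E →L[𝕜] E} (s : Finset ι)
    (hT : ∀ i ∉ s, T (b i) = 0) : IsCompactOperator T := by
  classical
  have hsum : T = ∑ i ∈ s, InnerProductSpace.rankOne 𝕜 (T (b i)) (b i) := by
    refine b.clm_ext fun j => ?_
    simp only [sum_apply, InnerProductSpace.rankOne_apply,
      orthonormal_iff_ite.mp b.orthonormal, ite_smul, one_smul, zero_smul]
    rw [Finset.sum_ite_eq']
    split_ifs with hj
    · rfl
    · exact hT j hj
  rw [hsum, ← mem_compactOperatorIdeal]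
  exact sum_mem fun i _ =>
    mem_compactOperatorIdeal.mpr (InnerProductSpace.isCompactOperator_rankOne _ _)

theorem adjoint_apply_of_apply_eq_smul [CompleteSpace E] {T : E →L[𝕜] E} {μ : ι → 𝕜}
    (hT : ∀ i, T (b i) = μ i • b i) (i : ι) : adjoint T (b i) = conj (μ i) • b i := by
  classical
  refine b.repr.injective (lp.ext (funext fun j => ?_))
  simp only [b.repr_apply_apply, adjoint_inner_right, hT, inner_smul_left, inner_smul_right,
    orthonormal_iff_ite.mp b.orthonormal]
  split_ifs with h <;> simp [h]

theorem mem_unitary_of_apply_eq_smul [CompleteSpace E] {T : E →L[𝕜] E} {μ : ι → 𝕜}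
    (hT : ∀ i, T (b i) = μ i • b i) (hμ : ∀ i, ‖μ i‖ = 1) : T ∈ unitary (E →L[𝕜] E) := by
  have hμ' : ∀ i, conj (μ i) * μ i = 1 := fun i => by
    rw [RCLike.conj_mul, hμ, RCLike.ofReal_one, one_pow]
  refine Unitary.mem_iff.mpr ⟨b.clm_ext fun i => ?_, b.clm_ext fun i => ?_⟩ <;>
    simp only [star_eq_adjoint, mul_apply_eq_comp, hT, map_smul,
      b.adjoint_apply_of_apply_eq_smul hT, smul_smul, hμ', mul_comm (μ i), one_smul,
      one_apply_eq_self]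

end HilbertBasis

section BlockOp

theorem blockOp_sub (A B C D A' B' C' D' : L2Circle →L[ℂ] L2Circle) :
    blockOp A B C D - blockOp A' B' C' D' =
      blockOp (A - A') (B - B') (C - C') (D - D') := by
  ext x
  simp only [blockOp, sub_apply, coe_comp, Function.comp_apply, ContinuousLinearEquiv.coe_coe,
    prod_apply, add_apply, coe_fst', coe_snd']
  rw [← map_sub]
  congr 1
  simp only [Prod.mk_sub_mk, Prod.mk.injEq]
  constructor <;> abel

theorem blockOp_mem_compactOperatorIdeal {A B C D : L2Circle →L[ℂ] L2Circle}
    (hA : A ∈ compactOperatorIdeal ℂ L2Circle) (hB : B ∈ compactOperatorIdeal ℂ L2Circle)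
    (hC : C ∈ compactOperatorIdeal ℂ L2Circle) (hD : D ∈ compactOperatorIdeal ℂ L2Circle) :
    blockOp A B C D ∈ compactOperatorIdeal ℂ (WithLp 2 (L2Circle × L2Circle)) := by
  simp only [mem_compactOperatorIdeal] at *
  have hrow {X Y : L2Circle →L[ℂ] L2Circle} (hX : IsCompactOperator X)
      (hY : IsCompactOperator Y) :
      IsCompactOperator (X ∘L fst ℂ L2Circle L2Circle + Y ∘L snd ℂ L2Circle L2Circle) :=
    (hX.comp_clm _).add (hY.comp_clm _)
  let e := WithLp.prodContinuousLinearEquiv 2 ℂ L2Circle L2Circle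
  exact (((hrow hA hB).prodMk (hrow hC hD)).comp_clm e.toContinuousLinearMap).clm_comp
    e.symm.toContinuousLinearMap

theorem blockOp_one_apply (x : WithLp 2 (L2Circle × L2Circle)) :
    blockOp 1 0 0 0 x = WithLp.toLp 2 ((WithLp.ofLp x).1, (0 : L2Circle)) := by
  simp [blockOp]

theorem isStarProjection_blockOp_one : IsStarProjection (blockOp 1 0 0 0) := by
  refine ⟨?_, ?_⟩
  · ext x
    simp [mul_apply_eq_comp, blockOp_one_apply]
  · rw [ContinuousLinearMap.isSelfAdjoint_iff_isSymmetric]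
    intro x y
    simp [blockOp_one_apply, WithLp.prod_inner_apply]

theorem loringOp_sub_blockOp_one_mem {f g h : ℂ → ℝ} {U M : L2Circle →L[ℂ] L2Circle}
    (hf : cfc (fun z : ℂ => (f z : ℂ)) U - 1 ∈ compactOperatorIdeal ℂ L2Circle)
    (hg : cfc (fun z : ℂ => (g z : ℂ)) U ∈ compactOperatorIdeal ℂ L2Circle)
    (hh : cfc (fun z : ℂ => (h z : ℂ)) U ∈ compactOperatorIdeal ℂ L2Circle) :
    loringOp f g h U M - blockOp 1 0 0 0 ∈
      compactOperatorIdeal ℂ (WithLp 2 (L2Circle × L2Circle)) := by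
  rw [loringOp, blockOp_sub, sub_zero, sub_zero, sub_zero]
  exact blockOp_mem_compactOperatorIdeal hf
    (TwoSidedIdeal.add_mem _ hg (TwoSidedIdeal.mul_mem_right _ _ _ hh))
    (TwoSidedIdeal.add_mem _ (TwoSidedIdeal.mul_mem_left _ _ _ hh) hg)
    (by rw [← neg_sub]; exact TwoSidedIdeal.neg_mem _ hf)

end BlockOp

noncomputable def utEigenvalue (t : ℝ) (n : ℤ) : ℂ :=
  if 0 ≤ n ∧ (n : ℝ) ≤ t then Complex.exp (2 * Real.pi * Complex.I * n / t) else 1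

theorem norm_utEigenvalue (t : ℝ) (n : ℤ) : ‖utEigenvalue t n‖ = 1 := by
  unfold utEigenvalue
  split_ifs <;> simp [Complex.norm_exp]

theorem utEigenvalue_eq_one {t : ℝ} {n : ℤ} (hn : n ∉ Finset.Icc 0 ⌊t⌋) :
    utEigenvalue t n = 1 :=
  if_neg fun ⟨h0, ht⟩ => hn (Finset.mem_Icc.mpr ⟨h0, Int.le_floor.mpr ht⟩)

theorem loring_operator_spectral_projection_compact
    (f g h : ℂ → ℝ)
    (hf : ContinuousOn f (Metric.sphere (0 : ℂ) 1))
    (hg : ContinuousOn g (Metric.sphere (0 : ℂ) 1))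
    (hh : ContinuousOn h (Metric.sphere (0 : ℂ) 1))
    (hf1 : f 1 = 1) (hg1 : g 1 = 0) (hh1 : h 1 = 0)
    (M : L2Circle →L[ℂ] L2Circle)
    (t : ℝ)
    (Ut : L2Circle →L[ℂ] L2Circle)
    (hU : ∀ n : ℤ,
      Ut (fourierLp 2 n) =
        (if 0 ≤ n ∧ (n : ℝ) ≤ t then Complex.exp (2 * Real.pi * Complex.I * n / t) else 1) •
          fourierLp 2 n)
    (hsa : IsSelfAdjoint (loringOp f g h Ut M))
    (hspec : (1 / 2 : ℝ) ∉ spectrum ℝ (loringOp f g h Ut M)) :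
    IsCompactOperator
      (cfc (fun x : ℝ => if 1 / 2 ≤ x then (1 : ℝ) else 0) (loringOp f g h Ut M) -
        blockOp 1 0 0 0) := by
  have hUb (n : ℤ) : Ut (fourierBasis n) = utEigenvalue t n • fourierBasis n := by
    rw [coe_fourierBasis]
    exact hU n
  have hUt : Ut ∈ unitary (L2Circle →L[ℂ] L2Circle) :=
    fourierBasis.mem_unitary_of_apply_eq_smul hUb (norm_utEigenvalue t)
  have hUt1 : Ut - 1 ∈ compactOperatorIdeal ℂ L2Circle :=
    mem_compactOperatorIdeal.mpr <| fourierBasis.isCompactOperator_of_apply_eq_zero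
      (Finset.Icc 0 ⌊t⌋) fun n hn => by
        rw [sub_apply, hUb, utEigenvalue_eq_one hn, one_smul, one_apply_eq_self, sub_self]
  have hcfc (φ : ℂ → ℝ) (hφ : ContinuousOn φ (Metric.sphere 0 1)) :
      cfc (fun z : ℂ => (φ z : ℂ)) Ut - algebraMap ℂ _ (φ 1) ∈ compactOperatorIdeal ℂ L2Circle :=
    cfc_sub_algebraMap_mem_of_unitary _ isClosed_compactOperatorIdeal hUt hUt1
      (continuous_ofReal.comp_continuousOn hφ)
  have hloring := loringOp_sub_blockOp_one_mem (M := M) (by simpa [hf1] using hcfc f hf)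
    (by simpa [hg1] using hcfc g hg) (by simpa [hh1] using hcfc h hh)
  exact mem_compactOperatorIdeal.mp <| cfc_ite_le_sub_mem _ isClosed_compactOperatorIdeal hsa
    isStarProjection_blockOp_one hloring (by norm_num) (by norm_num) hspec
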